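/- Let λ ≥ 1, let ι be an index type, and let (X_i)_{i∈ι} be a family of real Banach spaces each of which is an absolute λ-Lipschitz retract: for every metric space Z and every isometric embedding j : X_i → Z there exists a λ-Lipschitz map r : Z → X_i with r(j(x)) = x for all x ∈ X_i. Then the c₀-sum of the family — the closed subspace Y of the ℓ∞-sum lp X ∞ consisting of those x with ‖x_i‖ → 0 along the cofinite filter on ι (equivalently, {i : ‖x_i‖ ≥ ε} is finite for every ε > 0), with the supremum norm — is an absolute 2λ-Lipschitz retract. -/

import Mathlib

open Cardinal

/-- A metric space `X` is an absolute `λ`-Lipschitz retract if for every metric space `Z`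
and every isometric embedding `j : X → Z` there is a `λ`-Lipschitz map `r : Z → X` with
`r ∘ j = id`. -/
def IsAbsoluteLipschitzRetract.{z, x} (lam : NNReal) (X : Type x) [MetricSpace X] : Prop :=
  ∀ (Z : Type z) [MetricSpace Z] (j : X → Z), Isometry j →
    ∃ r : Z → X, LipschitzWith lam r ∧ ∀ x : X, r (j x) = x

/-- The `c₀`-sum of a family of Banach spaces, viewed as the subset of its `ℓ∞`-sum
consisting of the families whose norms tend to `0` along the cofinite filter. -/
def c0Sum {ι : Type u} (X : ι → Type v) [∀ i, NormedAddCommGroup (X i)] :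
    Set (lp X ⊤) :=
  {x : lp X ⊤ | Filter.Tendsto (fun i => ‖(x : ∀ i, X i) i‖) Filter.cofinite (nhds 0)}


/-!
Each coordinate map `y ↦ y i` is `1`-Lipschitz on `c0Sum X`, and it extends to a `λ`-Lipschitz
map `Z → X i`: the Fréchet embedding puts `X i` (already inside `Z` through `j ∘ lp.single ∞ i`)
isometrically into `ℓ^∞(Z, ℝ)`, a space in the universe of `Z`, where McShane extension is
available, and the `λ`-Lipschitz retraction brings the extension back to `X i`. These extensions
assemble into a `λ`-Lipschitz map `G : Z → lp X ∞` restricting to the inclusion on `c0Sum X`.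
Finally `lp X ∞` retracts onto `c0Sum X` by a `2`-Lipschitz map: shrink every coordinate
radially by the distance `θ` of the point to `c0Sum X`. The shrunk family lies in `c0Sum X`
since a point of `c0Sum X` at distance almost `θ` has small coordinates outside a finite set, and
the shrink is `1`-Lipschitz both in the vector and in the radius.
-/

open Set Metric
open scoped ENNReal NNReal lp

theorem dist_apply_le_dist {ι : Type*} {E : ι → Type*} [∀ i, NormedAddCommGroup (E i)]
    (x y : lp E ∞) (i : ι) : dist (x i) (y i) ≤ dist x y := by
  simpa using (lp.lipschitzWith_one_eval ∞ i).dist_le_mul x y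

section FrechetEmbedding

variable {Y : Type*} [PseudoMetricSpace Y]

noncomputable def frechetEmbedding (y₀ y : Y) : ℓ^∞(Y, ℝ) :=
  ⟨fun s => dist y s - dist y₀ s,
    memℓp_infty ⟨dist y y₀, by rintro - ⟨s, rfl⟩; exact abs_dist_sub_le y y₀ s⟩⟩

theorem frechetEmbedding_apply (y₀ y s : Y) : frechetEmbedding y₀ y s = dist y s - dist y₀ s :=
  rfl

theorem isometry_frechetEmbedding (y₀ : Y) : Isometry (frechetEmbedding y₀) := by
  refine Isometry.of_dist_eq fun y y' => le_antisymm ?_ ?_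
  · rw [dist_eq_norm]
    refine lp.norm_le_of_forall_le dist_nonneg fun s => ?_
    rw [lp.coeFn_sub, Pi.sub_apply, frechetEmbedding_apply, frechetEmbedding_apply,
      sub_sub_sub_cancel_right]
    exact abs_dist_sub_le y y' s
  · simpa [frechetEmbedding_apply, Real.dist_eq] using
      dist_apply_le_dist (frechetEmbedding y₀ y) (frechetEmbedding y₀ y') y'

end FrechetEmbedding

theorem IsAbsoluteLipschitzRetract.exists_lipschitzWith_extension.{z, x}
    {lam : ℝ≥0} {X : Type x} [MetricSpace X] (hX : IsAbsoluteLipschitzRetract.{z, x} lam X)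
    {Y : Type z} [MetricSpace Y] {ψ : X → Y} (hψ : Isometry ψ) [Nonempty X]
    {α : Type*} [PseudoMetricSpace α] {s : Set α} {f : α → X} {K : ℝ≥0}
    (hf : LipschitzOnWith K f s) :
    ∃ g : α → X, LipschitzWith (lam * K) g ∧ EqOn f g s := by
  set κ := frechetEmbedding (ψ (Classical.arbitrary X)) ∘ ψ
  have hκ : Isometry κ := (isometry_frechetEmbedding _).comp hψ
  obtain ⟨r, hr, hrκ⟩ := hX _ κ hκ
  obtain ⟨G, hG, hfG⟩ := (one_mul K ▸ hκ.lipschitz.comp_lipschitzOnWith hf).extend_lp_infty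
  refine ⟨r ∘ G, hr.comp hG, fun a ha => ?_⟩
  rw [Function.comp_apply, ← hfG ha, Function.comp_apply, hrκ]

theorem exists_lp_infty_extension_of_coordinatewise {ι : Type*} {E : ι → Type*}
    [∀ i, NormedAddCommGroup (E i)] {α : Type*} [PseudoMetricSpace α] {s : Set α}
    {f : α → lp E ∞} {K : ℝ≥0}
    (hext : ∀ i, ∃ g : α → E i, LipschitzWith K g ∧ EqOn (fun a => f a i) g s) :
    ∃ g : α → lp E ∞, LipschitzWith K g ∧ EqOn f g s := by
  choose g hg hfg using hext
  rcases s.eq_empty_or_nonempty with rfl | ⟨a₀, ha₀⟩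
  · exact ⟨0, LipschitzWith.const' 0, by simp⟩
  have hbdd : ∀ a, Memℓp (fun i => g i a) ∞ := fun a =>
    memℓp_infty ⟨K * dist a a₀ + ‖f a₀‖, by
      rintro - ⟨i, rfl⟩
      calc ‖g i a‖ ≤ ‖g i a - g i a₀‖ + ‖g i a₀‖ := norm_le_norm_sub_add _ _
        _ ≤ K * dist a a₀ + ‖f a₀‖ := by
          gcongr
          · rw [← dist_eq_norm]
            exact (hg i).dist_le_mul a a₀
          · rw [← hfg i ha₀]
            exact lp.norm_apply_le_norm ENNReal.top_ne_zero _ i⟩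
  refine ⟨fun a => ⟨_, hbdd a⟩, LipschitzWith.of_dist_le_mul fun a b => ?_,
    fun a ha => lp.ext (funext fun i => hfg i ha)⟩
  rw [dist_eq_norm]
  refine lp.norm_le_of_forall_le (by positivity) fun i => ?_
  have := (hg i).dist_le_mul a b
  rwa [dist_eq_norm] at this

section RadialShrink

variable {E : Type*} [NormedAddCommGroup E] [NormedSpace ℝ E]

noncomputable def radialShrink (t : ℝ) (v : E) : E := max (1 - t / ‖v‖) 0 • v

@[simp]
theorem radialShrink_zero_left (v : E) : radialShrink 0 v = v := by
  simp [radialShrink]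

theorem radialShrink_of_norm_le {t : ℝ} {v : E} (hv : ‖v‖ ≤ t) : radialShrink t v = 0 := by
  rcases eq_or_ne v 0 with rfl | hv₀
  · simp [radialShrink]
  · have : 1 ≤ t / ‖v‖ := (one_le_div (norm_pos_iff.mpr hv₀)).mpr hv
    simp [radialShrink, max_eq_right (sub_nonpos.mpr this)]

theorem norm_radialShrink {t : ℝ} (ht : 0 ≤ t) (v : E) :
    ‖radialShrink t v‖ = max (‖v‖ - t) 0 := by
  rcases eq_or_ne v 0 with rfl | hv₀
  · simp [radialShrink, ht]
  · have hv : 0 < ‖v‖ := norm_pos_iff.mpr hv₀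
    rw [radialShrink, norm_smul, Real.norm_of_nonneg (le_max_right _ _),
      max_mul_of_nonneg _ _ hv.le, zero_mul, sub_mul, one_mul, div_mul_cancel₀ _ hv.ne']

theorem norm_radialShrink_le {t : ℝ} (ht : 0 ≤ t) (v : E) : ‖radialShrink t v‖ ≤ ‖v‖ := by
  rw [norm_radialShrink ht]
  exact max_le (by linarith) (norm_nonneg v)

/-- Writing `a = 1 - t / ‖v‖ ≥ b = 1 - t / ‖w‖`, the difference is `a • (v - w) + (a - b) • w`,
and `(a - b) ‖w‖ = t (‖v‖ - ‖w‖) / ‖v‖ ≤ (1 - a) ‖v - w‖`. -/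
theorem norm_radialShrink_sub_radialShrink_le {t : ℝ} (ht : 0 ≤ t) (v w : E) :
    ‖radialShrink t v - radialShrink t w‖ ≤ ‖v - w‖ := by
  wlog hwv : ‖w‖ ≤ ‖v‖ generalizing v w
  · rw [norm_sub_rev, norm_sub_rev v]
    exact this w v (le_of_not_ge hwv)
  have hnorm : ‖v‖ - ‖w‖ ≤ ‖v - w‖ := norm_sub_norm_le v w
  rcases le_or_gt ‖v‖ t with hvt | htv
  · simp [radialShrink_of_norm_le hvt, radialShrink_of_norm_le (hwv.trans hvt)]
  rcases le_or_gt ‖w‖ t with hwt | htw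
  · rw [radialShrink_of_norm_le hwt, sub_zero, norm_radialShrink ht]
    exact max_le (by linarith) (norm_nonneg _)
  have hv : 0 < ‖v‖ := ht.trans_lt htv
  have hw : 0 < ‖w‖ := ht.trans_lt htw
  set a := 1 - t / ‖v‖ with ha
  set b := 1 - t / ‖w‖ with hb
  have hb₀ : 0 ≤ b := by rw [hb, sub_nonneg]; exact (div_lt_one hw).mpr htw |>.le
  have hba : b ≤ a := by
    rw [ha, hb]; exact sub_le_sub_left (div_le_div_of_nonneg_left ht hw hwv) 1
  have hdiff : radialShrink t v - radialShrink t w = a • (v - w) + (a - b) • w := by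
    rw [radialShrink, radialShrink, ← ha, ← hb, max_eq_left (hb₀.trans hba), max_eq_left hb₀]
    module
  have hab : (a - b) * ‖w‖ = t / ‖v‖ * (‖v‖ - ‖w‖) := by
    rw [ha, hb]; field_simp; ring
  calc ‖radialShrink t v - radialShrink t w‖
      ≤ a * ‖v - w‖ + (a - b) * ‖w‖ := by
        rw [hdiff]
        refine (norm_add_le _ _).trans_eq ?_
        rw [norm_smul, norm_smul, Real.norm_of_nonneg (hb₀.trans hba),
          Real.norm_of_nonneg (sub_nonneg.mpr hba)]
    _ ≤ a * ‖v - w‖ + t / ‖v‖ * ‖v - w‖ := by rw [hab]; gcongr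
    _ = ‖v - w‖ := by rw [ha]; ring

theorem norm_radialShrink_sub_radialShrink_left_le (t s : ℝ) (v : E) :
    ‖radialShrink t v - radialShrink s v‖ ≤ |t - s| := by
  rcases eq_or_ne v 0 with rfl | hv₀
  · simp [radialShrink]
  have hv : 0 < ‖v‖ := norm_pos_iff.mpr hv₀
  have hcoef : |max (1 - t / ‖v‖) 0 - max (1 - s / ‖v‖) 0| ≤ |t - s| / ‖v‖ := by
    calc |max (1 - t / ‖v‖) 0 - max (1 - s / ‖v‖) 0|
        ≤ |(1 - t / ‖v‖) - (1 - s / ‖v‖)| := abs_max_sub_max_le_abs _ _ _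
      _ = |t - s| / ‖v‖ := by
        rw [show (1 - t / ‖v‖) - (1 - s / ‖v‖) = (s - t) / ‖v‖ by ring, abs_div,
          abs_of_pos hv, abs_sub_comm]
  rw [radialShrink, radialShrink, ← sub_smul, norm_smul, Real.norm_eq_abs]
  calc _ ≤ |t - s| / ‖v‖ * ‖v‖ := by gcongr
    _ = |t - s| := div_mul_cancel₀ _ hv.ne'

end RadialShrink

section C0Retraction

variable {ι : Type*} {X : ι → Type*} [∀ i, NormedAddCommGroup (X i)]

theorem zero_mem_c0Sum : (0 : lp X ∞) ∈ c0Sum X := by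
  simpa [c0Sum] using tendsto_const_nhds

theorem single_mem_c0Sum [DecidableEq ι] (i : ι) (v : X i) : lp.single ∞ i v ∈ c0Sum X :=
  tendsto_const_nhds.congr' <| (Filter.eventually_cofinite_ne i).mono fun _ hk =>
    (congrArg norm (lp.single_apply_ne ∞ i v hk)).trans norm_zero |>.symm

variable [∀ i, NormedSpace ℝ (X i)]

noncomputable def c0SumRetraction (x : lp X ∞) : lp X ∞ :=
  ⟨fun i => radialShrink (infDist x (c0Sum X)) (x i), memℓp_infty ⟨‖x‖, by
    rintro - ⟨i, rfl⟩
    exact (norm_radialShrink_le infDist_nonneg _).trans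
      (lp.norm_apply_le_norm ENNReal.top_ne_zero x i)⟩⟩

theorem c0SumRetraction_apply (x : lp X ∞) (i : ι) :
    c0SumRetraction x i = radialShrink (infDist x (c0Sum X)) (x i) :=
  rfl

theorem c0SumRetraction_mem (x : lp X ∞) : c0SumRetraction x ∈ c0Sum X := by
  refine tendsto_order.2 ⟨fun a ha => .of_forall fun i => ha.trans_le (norm_nonneg _),
    fun ε hε => ?_⟩
  obtain ⟨w, hw, hxw⟩ := (infDist_lt_iff ⟨0, zero_mem_c0Sum⟩).mp
    (lt_add_of_pos_right (infDist x (c0Sum X)) (half_pos hε))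
  filter_upwards [(tendsto_order.1 hw).2 (ε / 2) (half_pos hε)] with i hwi
  have hxi : ‖x i‖ ≤ dist x w + ‖w i‖ :=
    (norm_le_norm_sub_add _ _).trans (by grw [← dist_eq_norm, dist_apply_le_dist])
  rw [c0SumRetraction_apply, norm_radialShrink infDist_nonneg]
  exact max_lt (by linarith) hε

theorem c0SumRetraction_eq_self {x : lp X ∞} (hx : x ∈ c0Sum X) : c0SumRetraction x = x :=
  lp.ext <| funext fun i => by rw [c0SumRetraction_apply, infDist_zero_of_mem hx,
    radialShrink_zero_left]

theorem lipschitzWith_c0SumRetraction : LipschitzWith 2 (c0SumRetraction (X := X)) := by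
  refine LipschitzWith.of_dist_le_mul fun x y => ?_
  rw [dist_eq_norm]
  refine lp.norm_le_of_forall_le (by positivity) fun i => ?_
  set θx := infDist x (c0Sum X)
  set θy := infDist y (c0Sum X)
  have hθ : |θx - θy| ≤ dist x y := by
    simpa [Real.dist_eq] using (lipschitz_infDist_pt (c0Sum X)).dist_le_mul x y
  calc ‖radialShrink θx (x i) - radialShrink θy (y i)‖
      ≤ ‖radialShrink θx (x i) - radialShrink θx (y i)‖
        + ‖radialShrink θx (y i) - radialShrink θy (y i)‖ :=
        norm_sub_le_norm_sub_add_norm_sub _ _ _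
    _ ≤ ‖x i - y i‖ + |θx - θy| :=
        add_le_add (norm_radialShrink_sub_radialShrink_le infDist_nonneg _ _)
          (norm_radialShrink_sub_radialShrink_left_le _ _ _)
    _ ≤ 2 * dist x y := by
        rw [← dist_eq_norm]; linarith [dist_apply_le_dist x y i]

end C0Retraction

theorem c0_sum_absolute_lipschitz_retract.{z, u, v}
    (lam : NNReal) (hlam : 1 ≤ lam) (ι : Type u)
    (X : ι → Type v) [∀ i, NormedAddCommGroup (X i)] [∀ i, NormedSpace ℝ (X i)]
    [∀ i, CompleteSpace (X i)]
    (h : ∀ i, IsAbsoluteLipschitzRetract.{z, v} lam (X i)) :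
    IsAbsoluteLipschitzRetract.{z, max u v} (2 * lam) ↥(c0Sum X) := by
  classical
  intro Z _ j hj
  set f : Z → lp X ∞ := Function.extend j Subtype.val 0
  have hfj : ∀ y, f (j y) = y := hj.injective.extend_apply _ _
  have hf : LipschitzOnWith 1 f (range j) := by
    rintro - ⟨y, rfl⟩ - ⟨y', rfl⟩
    rw [hfj, hfj, hj.edist_eq, ENNReal.coe_one, one_mul]
    rfl
  have hext (i : ι) : ∃ g : Z → X i, LipschitzWith lam g ∧ EqOn (fun z => f z i) g (range j) := by
    have hψ : Isometry fun v : X i => j ⟨lp.single ∞ i v, single_mem_c0Sum i v⟩ :=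
      hj.comp fun v w => lp.isometry_single i v w
    obtain ⟨g, hg, hfg⟩ := (h i).exists_lipschitzWith_extension hψ
      ((lp.lipschitzWith_one_eval ∞ i).comp_lipschitzOnWith hf)
    exact ⟨g, by simpa using hg, hfg⟩
  obtain ⟨G, hG, hfG⟩ := exists_lp_infty_extension_of_coordinatewise hext
  refine ⟨fun z => ⟨c0SumRetraction (G z), c0SumRetraction_mem _⟩,
    (lipschitzWith_c0SumRetraction.comp hG).subtype_mk _, fun y => Subtype.ext ?_⟩
  change c0SumRetraction (G (j y)) = y
  rw [← hfG (mem_range_self y), hfj, c0SumRetraction_eq_self y.2]
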